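/- Let μ be a Borel measure on ℝ^n that is s-concave, s ∈ (−∞, 1), on a class 𝒞 of convex sets, with the property that for every K, L ∈ 𝒞 with μ(K), μ(L) > 0 the mixed measures μ(K;L), μ(K;K) and μ(K;L,L) exist and are finite. Then μ(K)·μ(K;L,L) ≤ (1−s)·μ(K;L)². In particular, if μ is log-concave (s = 0), then μ(K)·μ(K;L,L) ≤ μ(K;L)². -/

import Mathlib

/-!
Write `f t = μ(K + tL)`. Since `K` and `L` are convex, `(1-λ)(K + xL) + λ(K + yL) = K + ((1-λ)x + λy)L`,
so `s`-concavity of `μ` says that `f` dominates its own `s`-power means along the ray, i.e. that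
`φ_s ∘ f` is concave near `0`, where `φ_s x = (x^s - 1)/s` (and `φ_0 = log`) is the Box–Cox
transform. As `φ_s' x = x^(s-1)` for every `s`, the one-sided second derivative of `φ_s ∘ f` at `0`
is `f^(s-2) (f f'' - (1-s) f'^2)`, and it is nonpositive because the right derivative of a concave
function is antitone.
-/

open MeasureTheory Set Filter Topology Pointwise

noncomputable section

/-- The mixed measure `μ(K;L) = lim_{ε→0⁺} (μ(K+εL) − μ(K))/ε` exists and equals `m`. -/
def HasMixedMeasure {n : ℕ} (μ : Measure (EuclideanSpace ℝ (Fin n)))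
    (K L : Set (EuclideanSpace ℝ (Fin n))) (m : ℝ) : Prop :=
  Tendsto (fun ε : ℝ => ((μ (K + ε • L)).toReal - (μ K).toReal) / ε) (𝓝[>] 0) (𝓝 m)

/-- The mixed measure `μ(K;L,L) = d²/ds² μ(K+sL)` at `s = 0` (one-sided) exists and
equals `m`. -/
def HasMixedMeasureSecond {n : ℕ} (μ : Measure (EuclideanSpace ℝ (Fin n)))
    (K L : Set (EuclideanSpace ℝ (Fin n))) (m : ℝ) : Prop :=
  ∃ g : ℝ → ℝ,
    (∀ s ∈ Ici (0:ℝ),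
      HasDerivWithinAt (fun u : ℝ => (μ (K + u • L)).toReal) (g s) (Ici 0) s) ∧
    HasDerivWithinAt g m (Ici 0) 0

/-- A class of sets: closed under Minkowski sums and nonnegative dilations. -/
def IsMinkowskiClass {n : ℕ} (𝒞 : Set (Set (EuclideanSpace ℝ (Fin n)))) : Prop :=
  ∀ K ∈ 𝒞, ∀ L ∈ 𝒞, ∀ s t : ℝ, 0 ≤ s → 0 ≤ t → s • K + t • L ∈ 𝒞

/-- `μ` is `s`-concave on the class `𝒞`: for `s ≠ 0`,
`μ((1−t)K + tL) ≥ ((1−t)μ(K)^s + tμ(L)^s)^{1/s}`, and for `s = 0` (log-concavity),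
`μ((1−t)K + tL) ≥ μ(K)^{1−t}μ(L)^t`, for all `t ∈ [0,1]` and `K, L ∈ 𝒞` with
`μ(K), μ(L) > 0`. -/
def IsSConcave {n : ℕ} (μ : Measure (EuclideanSpace ℝ (Fin n))) (s : ℝ)
    (𝒞 : Set (Set (EuclideanSpace ℝ (Fin n)))) : Prop :=
  ∀ K ∈ 𝒞, ∀ L ∈ 𝒞, ∀ t ∈ Icc (0:ℝ) 1, 0 < μ K → 0 < μ L → μ K ≠ ⊤ → μ L ≠ ⊤ →
    (if s = 0 then (μ K).toReal ^ (1 - t) * (μ L).toReal ^ t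
      else ((1 - t) * (μ K).toReal ^ s + t * (μ L).toReal ^ s) ^ (1 / s))
      ≤ (μ ((1 - t) • K + t • L)).toReal

def powerMean (s a b x y : ℝ) : ℝ :=
  if s = 0 then x ^ a * y ^ b else (a * x ^ s + b * y ^ s) ^ (1 / s)

def boxCox (s x : ℝ) : ℝ :=
  if s = 0 then Real.log x else (x ^ s - 1) / s

section BoxCox

variable {s a b x y : ℝ}

lemma powerMean_pos (hx : 0 < x) (hy : 0 < y) (ha : 0 ≤ a) (hb : 0 ≤ b) (hab : a + b = 1) :
    0 < powerMean s a b x y := by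
  unfold powerMean
  split_ifs
  · positivity
  · have hsum : 0 < a * x ^ s + b * y ^ s := by
      simpa only [smul_eq_mul, mem_Ioi] using
        convex_Ioi (0 : ℝ) (Real.rpow_pos_of_pos hx s) (Real.rpow_pos_of_pos hy s) ha hb hab
    positivity

lemma boxCox_powerMean (hx : 0 < x) (hy : 0 < y) (ha : 0 ≤ a) (hb : 0 ≤ b) (hab : a + b = 1) :
    boxCox s (powerMean s a b x y) = a * boxCox s x + b * boxCox s y := by
  unfold boxCox powerMean
  split_ifs with hs
  · rw [Real.log_mul (by positivity) (by positivity), Real.log_rpow hx, Real.log_rpow hy]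
  · have hsum : 0 ≤ a * x ^ s + b * y ^ s := by positivity
    rw [← Real.rpow_mul hsum, one_div, inv_mul_cancel₀ hs, Real.rpow_one]
    field_simp
    linear_combination hab

lemma monotoneOn_boxCox : MonotoneOn (boxCox s) (Ioi 0) := by
  intro x hx y hy hxy
  unfold boxCox
  split_ifs with hs
  · exact Real.log_le_log hx hxy
  rcases lt_or_gt_of_ne hs with hneg | hpos
  · exact div_le_div_of_nonpos_of_le hneg.le
      (sub_le_sub_right (Real.rpow_le_rpow_of_nonpos hx hxy hneg.le) 1)
  · exact div_le_div_of_nonneg_right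
      (sub_le_sub_right (Real.rpow_le_rpow hx.le hxy hpos.le) 1) hpos.le

lemma hasDerivAt_boxCox (hx : 0 < x) : HasDerivAt (boxCox s) (x ^ (s - 1)) x := by
  unfold boxCox
  split_ifs with hs
  · simpa [hs, Real.rpow_neg_one] using Real.hasDerivAt_log hx.ne'
  · exact (((Real.hasDerivAt_rpow_const (Or.inl hx.ne')).sub_const 1).div_const s).congr_deriv
      (mul_div_cancel_left₀ _ hs)

end BoxCox

lemma concaveOn_boxCox_comp {s : ℝ} {f : ℝ → ℝ} {D : Set ℝ} (hD : Convex ℝ D)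
    (hf : ∀ x ∈ D, 0 < f x)
    (hmean : ∀ x ∈ D, ∀ y ∈ D, ∀ a b : ℝ, 0 ≤ a → 0 ≤ b → a + b = 1 →
      powerMean s a b (f x) (f y) ≤ f (a * x + b * y)) :
    ConcaveOn ℝ D (boxCox s ∘ f) := by
  refine ⟨hD, fun x hx y hy a b ha hb hab => ?_⟩
  have hxy : a • x + b • y ∈ D := hD hx hy ha hb hab
  simp only [Function.comp_apply, smul_eq_mul] at hxy ⊢
  rw [← boxCox_powerMean (hf x hx) (hf y hy) ha hb hab]
  exact monotoneOn_boxCox (powerMean_pos (hf x hx) (hf y hy) ha hb hab) (hf _ hxy)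
    (hmean x hx y hy a b ha hb hab)

lemma ConcaveOn.antitoneOn_of_hasDerivWithinAt {S : Set ℝ} {f f' : ℝ → ℝ}
    (hfc : ConcaveOn ℝ S f) (hf : ∀ x ∈ S, HasDerivWithinAt f (f' x) S x) :
    AntitoneOn f' S := by
  intro x hx y hy hxy
  rcases hxy.eq_or_lt with rfl | hlt
  · rfl
  exact (hfc.le_slope_of_hasDerivWithinAt hx hy hlt (hf y hy)).trans
    (hfc.slope_le_of_hasDerivWithinAt hx hy hlt (hf x hx))

lemma accPt_Icc_left {a b : ℝ} (hab : a < b) : AccPt a (𝓟 (Icc a b)) := by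
  rw [accPt_principal_iff_nhdsWithin, Icc_sdiff_left, nhdsWithin_Ioc_eq_nhdsGT hab]
  infer_instance

theorem mul_le_of_concaveOn_boxCox_comp {s a b q : ℝ} {f g : ℝ → ℝ} (hab : a < b)
    (hf : ∀ t ∈ Icc a b, 0 < f t)
    (hfg : ∀ t ∈ Icc a b, HasDerivWithinAt f (g t) (Icc a b) t)
    (hgq : HasDerivWithinAt g q (Icc a b) a)
    (hconc : ConcaveOn ℝ (Icc a b) (boxCox s ∘ f)) :
    f a * q ≤ (1 - s) * g a ^ 2 := by
  have ha : a ∈ Icc a b := left_mem_Icc.2 hab.le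
  have hderiv : ∀ t ∈ Icc a b,
      HasDerivWithinAt (boxCox s ∘ f) (f t ^ (s - 1) * g t) (Icc a b) t := fun t ht =>
    (hasDerivAt_boxCox (hf t ht)).comp_hasDerivWithinAt t (hfg t ht)
  have hsecond : HasDerivWithinAt (fun t => f t ^ (s - 1) * g t)
      (g a * (s - 1) * f a ^ (s - 1 - 1) * g a + f a ^ (s - 1) * q) (Icc a b) a :=
    ((hfg a ha).rpow_const (Or.inl (hf a ha).ne')).mul hgq
  have hnonpos := hsecond.nonpos_of_antitoneOn (accPt_Icc_left hab)
    (hconc.antitoneOn_of_hasDerivWithinAt hderiv)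
  have hfa := hf a ha
  have hpow : f a ^ (s - 1) = f a ^ (s - 2) * f a := by
    rw [show s - 1 = (s - 2) + 1 by ring, Real.rpow_add_one hfa.ne']
  rw [show s - 1 - 1 = s - 2 by ring, hpow] at hnonpos
  have hfactor : f a ^ (s - 2) * (f a * q - (1 - s) * g a ^ 2) ≤ 0 := by
    linear_combination hnonpos
  exact sub_nonpos.1 (nonpos_of_mul_nonpos_right hfactor (Real.rpow_pos_of_pos hfa _))

lemma Convex.combo_add_smul {E : Type*} [AddCommGroup E] [Module ℝ E] {K L : Set E}
    (hK : Convex ℝ K) (hL : Convex ℝ L) {x y a b : ℝ} (hx : 0 ≤ x) (hy : 0 ≤ y)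
    (ha : 0 ≤ a) (hb : 0 ≤ b) (hab : a + b = 1) :
    a • (K + x • L) + b • (K + y • L) = K + (a * x + b * y) • L := by
  rw [smul_add, smul_add, smul_smul, smul_smul, add_add_add_comm, ← hK.add_smul ha hb,
    ← hL.add_smul (mul_nonneg ha hx) (mul_nonneg hb hy), hab, one_smul]

section MixedMeasure

variable {n : ℕ} {μ : Measure (EuclideanSpace ℝ (Fin n))} {K L : Set (EuclideanSpace ℝ (Fin n))}

lemma hasMixedMeasure_iff_hasDerivWithinAt (hL : L.Nonempty) {m : ℝ} :
    HasMixedMeasure μ K L m ↔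
      HasDerivWithinAt (fun t : ℝ => (μ (K + t • L)).toReal) m (Ici 0) 0 := by
  rw [← hasDerivWithinAt_Ioi_iff_Ici, hasDerivWithinAt_iff_tendsto_slope' self_notMem_Ioi,
    HasMixedMeasure]
  congr! 2 with ε
  rw [slope_def_field, sub_zero, zero_smul_set hL, add_zero]

lemma IsSConcave.powerMean_le_measure_add_smul {s : ℝ} {𝒞 : Set (Set (EuclideanSpace ℝ (Fin n)))}
    (hSC : IsSConcave μ s 𝒞) (hclass : IsMinkowskiClass 𝒞) (hK : K ∈ 𝒞) (hL : L ∈ 𝒞)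
    (hKc : Convex ℝ K) (hLc : Convex ℝ L) {x y a b : ℝ} (hx : 0 ≤ x) (hy : 0 ≤ y)
    (ha : 0 ≤ a) (hb : 0 ≤ b) (hab : a + b = 1)
    (hμx : 0 < (μ (K + x • L)).toReal) (hμy : 0 < (μ (K + y • L)).toReal) :
    powerMean s a b (μ (K + x • L)).toReal (μ (K + y • L)).toReal
      ≤ (μ (K + (a * x + b * y) • L)).toReal := by
  have hmem : ∀ t : ℝ, 0 ≤ t → K + t • L ∈ 𝒞 := fun t ht => by
    simpa only [one_smul] using hclass K hK L hL 1 t zero_le_one ht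
  obtain ⟨hx0, hxtop⟩ := ENNReal.toReal_pos_iff.1 hμx
  obtain ⟨hy0, hytop⟩ := ENNReal.toReal_pos_iff.1 hμy
  have h := hSC _ (hmem x hx) _ (hmem y hy) b ⟨hb, by linarith⟩ hx0 hy0 hxtop.ne hytop.ne
  rwa [show 1 - b = a by linarith, hKc.combo_add_smul hLc hx hy ha hb hab] at h

end MixedMeasure

theorem minkowski_second_for_s_concave_measures_general {n : ℕ}
    (μ : Measure (EuclideanSpace ℝ (Fin n))) (s : ℝ)
    (𝒞 : Set (Set (EuclideanSpace ℝ (Fin n))))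
    (hconv : ∀ A ∈ 𝒞, Convex ℝ A)
    (hclass : IsMinkowskiClass 𝒞)
    (hSC : IsSConcave μ s 𝒞)
    (K L : Set (EuclideanSpace ℝ (Fin n))) (hK : K ∈ 𝒞) (hL : L ∈ 𝒞)
    (hK0 : 0 < μ K) (hL0 : 0 < μ L) (hKfin : μ K ≠ ⊤)
    (mKL mKLL : ℝ)
    (hKL : HasMixedMeasure μ K L mKL) (hKLL : HasMixedMeasureSecond μ K L mKLL) :
    (μ K).toReal * mKLL ≤ (1 - s) * mKL ^ 2 := by
  obtain ⟨g, hg, hg'⟩ := hKLL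
  set f : ℝ → ℝ := fun t => (μ (K + t • L)).toReal
  have hLne : L.Nonempty := nonempty_of_measure_ne_zero hL0.ne'
  have hf0 : f 0 = (μ K).toReal := by simp only [f, zero_smul_set hLne, add_zero]
  have hg0 : g 0 = mKL := (uniqueDiffWithinAt_Ici 0).eq_deriv _ (hg 0 self_mem_Ici)
    ((hasMixedMeasure_iff_hasDerivWithinAt hLne).1 hKL)
  obtain ⟨δ, hδ, hfpos⟩ : ∃ δ > 0, ∀ t ∈ Icc 0 δ, 0 < f t := by
    have hf0pos : 0 < f 0 := hf0 ▸ ENNReal.toReal_pos hK0.ne' hKfin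
    exact mem_nhdsGE_iff_exists_Icc_subset.1
      ((hg 0 self_mem_Ici).continuousWithinAt (isOpen_Ioi.mem_nhds hf0pos))
  have hconc : ConcaveOn ℝ (Icc 0 δ) (boxCox s ∘ f) :=
    concaveOn_boxCox_comp (convex_Icc 0 δ) hfpos fun x hx y hy a b ha hb hab =>
      hSC.powerMean_le_measure_add_smul hclass hK hL (hconv K hK) (hconv L hL) hx.1 hy.1
        ha hb hab (hfpos x hx) (hfpos y hy)
  have hineq := mul_le_of_concaveOn_boxCox_comp hδ hfpos
    (fun t ht => (hg t ht.1).mono Icc_subset_Ici_self) (hg'.mono Icc_subset_Ici_self) hconc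
  rwa [hf0, hg0] at hineq

/-- Minkowski's second inequality for `s`-concave measures, `s ∈ (−∞,1)`:
`μ(K)·μ(K;L,L) ≤ (1−s)·μ(K;L)²` (in particular `μ(K)μ(K;L,L) ≤ μ(K;L)²` for
log-concave `μ`, i.e. `s = 0`). -/
theorem minkowski_second_for_s_concave_measures {n : ℕ}
    (μ : Measure (EuclideanSpace ℝ (Fin n))) (s : ℝ) (hs : s < 1)
    (𝒞 : Set (Set (EuclideanSpace ℝ (Fin n))))
    (hconv : ∀ A ∈ 𝒞, Convex ℝ A)
    (hclass : IsMinkowskiClass 𝒞)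
    (hSC : IsSConcave μ s 𝒞)
    (hex : ∀ K ∈ 𝒞, ∀ L ∈ 𝒞, 0 < μ K → 0 < μ L →
      (∃ m, HasMixedMeasure μ K L m) ∧ (∃ m, HasMixedMeasure μ K K m) ∧
      (∃ m, HasMixedMeasureSecond μ K L m))
    (K L : Set (EuclideanSpace ℝ (Fin n))) (hK : K ∈ 𝒞) (hL : L ∈ 𝒞)
    (hK0 : 0 < μ K) (hL0 : 0 < μ L) (hKfin : μ K ≠ ⊤) (hLfin : μ L ≠ ⊤)
    (mKL mKLL : ℝ)
    (hKL : HasMixedMeasure μ K L mKL) (hKLL : HasMixedMeasureSecond μ K L mKLL) :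
    (μ K).toReal * mKLL ≤ (1 - s) * mKL ^ 2 :=
  minkowski_second_for_s_concave_measures_general μ s 𝒞 hconv hclass hSC K L hK hL hK0 hL0 hKfin mKL
    mKLL hKL hKLL
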